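/- (Equivariance of causal graph filters restricted to a subset of GSOs) Let N ≥ 1, let A be an N×N real strictly lower triangular matrix with causal graph-shift operators S_k = W · D_k · W⁻¹, and let U ⊆ Fin N. Let σ be a permutation of Fin N that fixes every node outside U (σ(i) = i for all i ∉ U), with permutation matrix P, and let S'_q be the permuted GSOs built from A' = P A Pᵀ. Then for all coefficients θ ∈ ℝ^N with θ'_{σ(k)} = θ_k and all x ∈ ℝ^N, the filter using only the GSOs indexed by U is equivariant: ∑_{q ∈ U} θ'_q · S'_q · (P x) = P · (∑_{k ∈ U} θ_k · S_k · x). -/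

import Mathlib

/-!
Relabelling the nodes by `σ` acts on matrices as conjugation by `P`, i.e. as reindexing both
rows and columns along `σ⁻¹`, and reindexing along a bijection commutes with `1`, subtraction,
products, inversion and diagonal matrices. Hence `W'` is `W` reindexed, `S'_{σ k}` is `S_k`
reindexed, and `S'_{σ k} (P x) = P (S_k x)`. Since `σ` fixes every node outside `U`, it maps `U`
onto itself, so reindexing the sum over `U` along `σ` matches the two filters term by term.
-/

open Matrix

namespace Matrix

variable {m n R : Type*}

lemma eq_permMatrix_symm_of_apply [DecidableEq n] [Zero R] [One R] {σ : Equiv.Perm n}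
    {P : Matrix n n R} (hP : ∀ i j, P i j = if σ j = i then 1 else 0) :
    P = Equiv.Perm.permMatrix R σ.symm := by
  ext i j
  simp only [hP, PEquiv.toMatrix_apply, Equiv.toPEquiv_apply, Option.mem_def, Option.some.injEq,
    Equiv.symm_apply_eq, eq_comm (a := i)]

lemma permMatrix_mul_mul_transpose [Fintype n] [DecidableEq n] [NonAssocSemiring R]
    (σ : Equiv.Perm n) (M : Matrix n n R) :
    σ.permMatrix R * M * (σ.permMatrix R)ᵀ = M.submatrix σ σ := by
  rw [transpose_permMatrix, PEquiv.toMatrix_toPEquiv_mul, PEquiv.mul_toMatrix_toPEquiv]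
  rfl

lemma submatrix_mulVec_comp_equiv [Fintype m] [Fintype n] [NonUnitalNonAssocSemiring R]
    (M : Matrix n n R) (e : m ≃ n) (v : n → R) :
    M.submatrix e e *ᵥ (v ∘ e) = (M *ᵥ v) ∘ e := by
  rw [submatrix_mulVec_equiv, Function.comp_assoc, e.self_comp_symm, Function.comp_id]

variable [Fintype m] [Fintype n] [DecidableEq m] [DecidableEq n] [CommRing R]

lemma inv_one_sub_submatrix_equiv (A : Matrix n n R) (e : m ≃ n) :
    (1 - A.submatrix e e)⁻¹ = (1 - A)⁻¹.submatrix e e := by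
  rw [← inv_submatrix_equiv, ← submatrix_one_equiv e]
  rfl

/-- The paper's `S_k = W D_k W⁻¹`, for `W` the weighted transitive closure. -/
noncomputable def causalGSO [DecidableEq R] (W : Matrix n n R) (k : n) : Matrix n n R :=
  W * diagonal (fun i => if W k i ≠ 0 then 1 else 0) * W⁻¹

lemma causalGSO_submatrix_equiv [DecidableEq R] (W : Matrix n n R) (e : m ≃ n) (k : m) :
    causalGSO (W.submatrix e e) k = (causalGSO W (e k)).submatrix e e := by
  rw [causalGSO, causalGSO, inv_submatrix_equiv, ← submatrix_mul_equiv _ _ _ e,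
    ← submatrix_mul_equiv _ _ _ e, submatrix_diagonal_equiv]
  rfl

end Matrix

theorem restricted_causal_graph_filter_equivariant_general {N : ℕ}
    (A : Matrix (Fin N) (Fin N) ℝ)
    (W : Matrix (Fin N) (Fin N) ℝ) (hW : W = (1 - A)⁻¹)
    (D : Fin N → Matrix (Fin N) (Fin N) ℝ)
    (hD : ∀ k, D k = Matrix.diagonal (fun i => if W k i ≠ 0 then (1 : ℝ) else 0))
    (S : Fin N → Matrix (Fin N) (Fin N) ℝ)
    (hS : ∀ k, S k = W * D k * W⁻¹)
    (U : Finset (Fin N))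
    (σ : Equiv.Perm (Fin N))
    (hσU : ∀ i : Fin N, i ∉ U → σ i = i)
    (P : Matrix (Fin N) (Fin N) ℝ)
    (hP : ∀ i j : Fin N, P i j = if σ j = i then 1 else 0)
    (A' : Matrix (Fin N) (Fin N) ℝ) (hA'def : A' = P * A * Pᵀ)
    (W' : Matrix (Fin N) (Fin N) ℝ) (hW' : W' = (1 - A')⁻¹)
    (D' : Fin N → Matrix (Fin N) (Fin N) ℝ)
    (hD' : ∀ q, D' q = Matrix.diagonal (fun i => if W' q i ≠ 0 then (1 : ℝ) else 0))
    (S' : Fin N → Matrix (Fin N) (Fin N) ℝ)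
    (hS' : ∀ q, S' q = W' * D' q * W'⁻¹)
    (θ θ' : Fin N → ℝ) (hθ' : ∀ k : Fin N, θ' (σ k) = θ k)
    (x : Fin N → ℝ) :
    ∑ q ∈ U, θ' q • (S' q *ᵥ (P *ᵥ x)) = P *ᵥ (∑ k ∈ U, θ k • (S k *ᵥ x)) := by
  have hPσ : P = Equiv.Perm.permMatrix ℝ σ.symm := eq_permMatrix_symm_of_apply hP
  have hW'σ : W' = W.submatrix σ.symm σ.symm := by
    rw [hW', hA'def, hPσ, permMatrix_mul_mul_transpose, inv_one_sub_submatrix_equiv, hW]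
  have hS'σ (k : Fin N) : S' (σ k) = (S k).submatrix σ.symm σ.symm := by
    have h := causalGSO_submatrix_equiv W σ.symm (σ k)
    rw [σ.symm_apply_apply] at h
    rw [hS', hD', hS, hD, hW'σ]
    exact h
  have hS'σ_mulVec (k : Fin N) : S' (σ k) *ᵥ (P *ᵥ x) = P *ᵥ (S k *ᵥ x) := by
    rw [hS'σ, hPσ, permMatrix_mulVec, permMatrix_mulVec, submatrix_mulVec_comp_equiv]
  have hU : {i | σ i ≠ i} ⊆ U := fun i hi => by_contra (hi ∘ hσU i)
  calc ∑ q ∈ U, θ' q • (S' q *ᵥ (P *ᵥ x))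
      = ∑ k ∈ U, θ' (σ k) • (S' (σ k) *ᵥ (P *ᵥ x)) := (Equiv.Perm.sum_comp σ U _ hU).symm
    _ = ∑ k ∈ U, θ k • (P *ᵥ (S k *ᵥ x)) := by simp only [hθ', hS'σ_mulVec]
    _ = P *ᵥ (∑ k ∈ U, θ k • (S k *ᵥ x)) := by simp only [mulVec_sum, mulVec_smul]

/-- Equivariance of causal graph filters restricted to a subset
`U` of GSOs: if the permutation `σ` fixes every node outside `U`, then
`∑_{q ∈ U} θ'_q • S'_q (P x) = P (∑_{k ∈ U} θ_k • S_k x)`. -/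
theorem restricted_causal_graph_filter_equivariant {N : ℕ} (hN : 1 ≤ N)
    (A : Matrix (Fin N) (Fin N) ℝ)
    (hA : ∀ i j : Fin N, i ≤ j → A i j = 0)
    (W : Matrix (Fin N) (Fin N) ℝ) (hW : W = (1 - A)⁻¹)
    (D : Fin N → Matrix (Fin N) (Fin N) ℝ)
    (hD : ∀ k, D k = Matrix.diagonal (fun i => if W k i ≠ 0 then (1 : ℝ) else 0))
    (S : Fin N → Matrix (Fin N) (Fin N) ℝ)
    (hS : ∀ k, S k = W * D k * W⁻¹)
    (U : Finset (Fin N))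
    (σ : Equiv.Perm (Fin N))
    (hσU : ∀ i : Fin N, i ∉ U → σ i = i)
    (P : Matrix (Fin N) (Fin N) ℝ)
    (hP : ∀ i j : Fin N, P i j = if σ j = i then 1 else 0)
    (A' : Matrix (Fin N) (Fin N) ℝ) (hA'def : A' = P * A * Pᵀ)
    (W' : Matrix (Fin N) (Fin N) ℝ) (hW' : W' = (1 - A')⁻¹)
    (D' : Fin N → Matrix (Fin N) (Fin N) ℝ)
    (hD' : ∀ q, D' q = Matrix.diagonal (fun i => if W' q i ≠ 0 then (1 : ℝ) else 0))
    (S' : Fin N → Matrix (Fin N) (Fin N) ℝ)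
    (hS' : ∀ q, S' q = W' * D' q * W'⁻¹)
    (θ θ' : Fin N → ℝ) (hθ' : ∀ k : Fin N, θ' (σ k) = θ k)
    (x : Fin N → ℝ) :
    ∑ q ∈ U, θ' q • (S' q *ᵥ (P *ᵥ x)) = P *ᵥ (∑ k ∈ U, θ k • (S k *ᵥ x)) :=
  restricted_causal_graph_filter_equivariant_general A W hW D hD S hS U σ hσU P hP A' hA'def W' hW'
    D' hD' S' hS' θ θ' hθ' x
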